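/- arXiv:2503.16092 — 3 statements merged into one kernel-verified Lean document; each statement's English description precedes it below -/
import Mathlib

section
/- Let U be a complex Hilbert space, let φ : U → U be continuous and monotone (Re⟨φ(u₂) − φ(u₁), u₂ − u₁⟩ ≥ 0 for all u₁, u₂), and let Q ∈ L(U) be a bounded linear operator with Re⟨Qu, u⟩ ≥ c‖u‖² for all u ∈ U and some c > 0. Then for all u, r ∈ U the equation y = r + Q φ(u − y) has a unique solution y ∈ U. -/
/-!
Writing `y = r + Q w`, the equation becomes `w = φ (u - r - Q w)`. Since `Q` is coercive, so is
its adjoint, which is therefore injective; hence the solutions are exactly the zeros of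
`S w = Q† (w - φ (u - r - Q w))`. On the underlying real Hilbert space `S` is continuous and
strongly monotone, by monotonicity of `φ` and coercivity of `Q`, and such maps are bijective
(Minty–Browder). Injectivity is immediate. For surjectivity in finite dimension, induct on the
dimension: solve on the hyperplane `(ℝ ∙ e)ᗮ` at every height `t • e`; the remaining scalar
equation in `t` is continuous and strongly monotone on `ℝ`, so the intermediate value theorem
applies. In
general, the Galerkin solutions on finite-dimensional subspaces are bounded, have a weak cluster
point by Banach–Alaoglu, and Minty's trick shows that this point is a solution.
-/

open scoped InnerProductSpace
open Module Submodule Filter Topology Function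

section RealHilbert

variable {E : Type*} [NormedAddCommGroup E] [InnerProductSpace ℝ E]

theorem eq_of_forall_inner_sub_nonneg {S : E → E} (hS : Continuous S) {b z : E}
    (h : ∀ v, 0 ≤ ⟪S v - b, v - z⟫_ℝ) : S z = b := by
  have hdir : ∀ w, 0 ≤ ⟪S z - b, w⟫_ℝ := by
    intro w
    have hpos : ∀ t : ℝ, 0 < t → 0 ≤ ⟪S (z + t • w) - b, w⟫_ℝ := fun t ht => by
      have h1 := h (z + t • w)
      rwa [add_sub_cancel_left, real_inner_smul_right, mul_nonneg_iff_of_pos_left ht] at h1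
    have hlim : Tendsto (fun t : ℝ => ⟪S (z + t • w) - b, w⟫_ℝ) (𝓝[>] 0)
        (𝓝 ⟪S z - b, w⟫_ℝ) :=
      ((by fun_prop : Continuous fun t : ℝ => ⟪S (z + t • w) - b, w⟫_ℝ).tendsto' 0 _
        (by simp)).mono_left nhdsWithin_le_nhds
    exact ge_of_tendsto hlim (eventually_nhdsWithin_of_forall hpos)
  have h0 := hdir (-(S z - b))
  rw [inner_neg_right, neg_nonneg, real_inner_self_nonpos, sub_eq_zero] at h0
  exact h0

theorem exists_tendsto_inner_of_norm_le [CompleteSpace E] {ι : Type*} (l : Ultrafilter ι)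
    {x : ι → E} {R : ℝ} (hx : ∀ i, ‖x i‖ ≤ R) :
    ∃ z : E, ∀ v, Tendsto (fun i => ⟪x i, v⟫_ℝ) l (𝓝 ⟪z, v⟫_ℝ) := by
  let f : ι → WeakDual ℝ E := fun i => StrongDual.toWeakDual (InnerProductSpace.toDual ℝ E (x i))
  obtain ⟨ℓ, -, hℓ⟩ := (WeakDual.isCompact_closedBall 0 R).ultrafilter_le_nhds (l.map f) (by
    rw [Ultrafilter.coe_map, le_principal_iff]
    exact mem_map.mpr (univ_mem' fun i => by simpa [f] using hx i))
  refine ⟨(InnerProductSpace.toDual ℝ E).symm (WeakDual.toStrongDual ℓ), fun v => ?_⟩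
  rw [InnerProductSpace.toDual_symm_apply]
  rw [Ultrafilter.coe_map] at hℓ
  exact ((WeakDual.eval_continuous v).tendsto ℓ).comp hℓ

def IsStronglyMonotone (c : ℝ) (S : E → E) : Prop :=
  ∀ x y, c * ‖x - y‖ ^ 2 ≤ ⟪S x - S y, x - y⟫_ℝ

namespace IsStronglyMonotone

variable {c : ℝ} {S : E → E}

theorem mul_norm_sub_le (hS : IsStronglyMonotone c S) {x y d : E}
    (h : ⟪S x - S y, x - y⟫_ℝ ≤ ⟪d, x - y⟫_ℝ) : c * ‖x - y‖ ≤ ‖d‖ := by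
  have key : c * ‖x - y‖ * ‖x - y‖ ≤ ‖d‖ * ‖x - y‖ := by
    nlinarith [hS x y, real_inner_le_norm d (x - y)]
  rcases (norm_nonneg (x - y)).eq_or_lt with h0 | h0
  · rw [← h0, mul_zero]
    exact norm_nonneg d
  · exact le_of_mul_le_mul_right key h0

theorem injective (hS : IsStronglyMonotone c S) (hc : 0 < c) : Injective S := by
  intro x y hxy
  have h := hS.mul_norm_sub_le (x := x) (y := y) (d := 0) (by rw [hxy, sub_self])
  rw [norm_zero] at h
  exact sub_eq_zero.mp (norm_le_zero_iff.mp (nonpos_of_mul_nonpos_right h hc))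

theorem comp_add_const (hS : IsStronglyMonotone c S) (a : E) :
    IsStronglyMonotone c (fun x => S (x + a)) := by
  intro x y
  simpa only [add_sub_add_right_eq_sub] using hS (x + a) (y + a)

theorem orthogonalProjectionOnto_comp (hS : IsStronglyMonotone c S) (K : Submodule ℝ E)
    [K.HasOrthogonalProjection] :
    IsStronglyMonotone c (fun w : K => K.orthogonalProjectionOnto (S w)) := by
  intro x y
  rw [← map_sub, inner_orthogonalProjectionOnto_eq_of_mem_right, Submodule.coe_sub]
  exact hS x y

theorem exists_sub_mem_orthogonal (hS : IsStronglyMonotone c S) (hScont : Continuous S)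
    {K : Submodule ℝ E} [K.HasOrthogonalProjection]
    (hK : ∀ T : K → K, IsStronglyMonotone c T → Continuous T → Surjective T) (b : E) :
    ∃ w : K, S w - b ∈ Kᗮ := by
  obtain ⟨w, hw⟩ := hK _ (hS.orthogonalProjectionOnto_comp K)
    (K.orthogonalProjectionOnto.continuous.comp (hScont.comp continuous_subtype_val))
    (K.orthogonalProjectionOnto b)
  refine ⟨w, ?_⟩
  rw [← orthogonalProjectionOnto_eq_zero_iff, map_sub, sub_eq_zero]
  exact hw

theorem continuous_of_sub_mem_orthogonal (hS : IsStronglyMonotone c S) (hc : 0 < c)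
    (hScont : Continuous S) {X : Type*} [TopologicalSpace X] {a : X → E} (ha : Continuous a)
    {K : Submodule ℝ E} {w : X → K} {b : E} (hw : ∀ t, S (w t + a t) - b ∈ Kᗮ) :
    Continuous w := by
  refine continuous_iff_continuousAt.mpr fun s => ?_
  have hle : ∀ t, dist (w t) (w s) ≤ ‖S (w s + a s) - S (w s + a t)‖ / c := by
    intro t
    rw [dist_eq_norm, le_div_iff₀' hc, coe_norm, Submodule.coe_sub]
    have h := hS.mul_norm_sub_le (x := w t + a t) (y := w s + a t)
      (d := S (w s + a s) - S (w s + a t)) ?_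
    · simpa only [add_sub_add_right_eq_sub] using h
    have hperp : ⟪(S (w t + a t) - b) - (S (w s + a s) - b), ((w t - w s : K) : E)⟫_ℝ = 0 :=
      inner_left_of_mem_orthogonal (w t - w s).2 (sub_mem (hw t) (hw s))
    have hdiff : S (w t + a t) - S (w s + a t) - (S (w s + a s) - S (w s + a t)) =
        (S (w t + a t) - b) - (S (w s + a s) - b) := by abel
    rw [add_sub_add_right_eq_sub, ← Submodule.coe_sub, ← sub_nonpos, ← inner_sub_left, hdiff,
      hperp]
  have hlim : Tendsto (fun t => ‖S (w s + a s) - S (w s + a t)‖ / c) (𝓝 s) (𝓝 0) := by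
    have hcont : Continuous fun t => ‖S (w s + a s) - S (w s + a t)‖ / c := by fun_prop
    simpa using hcont.tendsto s
  exact tendsto_iff_dist_tendsto_zero.mpr (squeeze_zero (fun _ => dist_nonneg) hle hlim)

theorem surjective_of_real {f : ℝ → ℝ} (hf : IsStronglyMonotone c f)
    (hc : 0 < c) (hfcont : Continuous f) : Surjective f := by
  have hgrowth : ∀ s t, s ≤ t → c * (t - s) ≤ f t - f s := by
    intro s t hst
    have h := hf t s
    rw [Real.norm_eq_abs, sq_abs, Real.inner_apply] at h
    rcases hst.eq_or_lt with rfl | hlt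
    · simp
    · nlinarith
  refine hfcont.surjective ?_ ?_
  · refine tendsto_atTop_mono' _ ((eventually_ge_atTop 0).mono fun t ht => ?_)
      (tendsto_atTop_add_const_left _ (f 0) (tendsto_id.const_mul_atTop hc))
    have h := hgrowth 0 t ht
    simp only [id, sub_zero] at h ⊢
    linarith
  · refine tendsto_atBot_mono' _ ((eventually_le_atBot 0).mono fun t ht => ?_)
      (tendsto_atBot_add_const_left _ (f 0) (tendsto_id.const_mul_atBot hc))
    have h := hgrowth t 0 ht
    simp only [id, zero_sub] at h ⊢
    linarith

theorem surjective_of_orthogonal_span_singleton (hS : IsStronglyMonotone c S) (hc : 0 < c)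
    (hScont : Continuous S) {e : E} (he : ‖e‖ = 1)
    (hW : ∀ T : (ℝ ∙ e)ᗮ → (ℝ ∙ e)ᗮ, IsStronglyMonotone c T → Continuous T → Surjective T) :
    Surjective S := by
  intro b
  set W := (ℝ ∙ e)ᗮ
  choose w hw using fun t : ℝ =>
    (hS.comp_add_const (t • e)).exists_sub_mem_orthogonal (by fun_prop) hW b
  have hwcont : Continuous w :=
    hS.continuous_of_sub_mem_orthogonal hc hScont (continuous_id.smul continuous_const) hw
  set x : ℝ → E := fun t => w t + t • e
  have hψ : IsStronglyMonotone c (fun t => ⟪S (x t) - b, e⟫_ℝ) := by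
    intro s t
    have hsplit : x s - x t = ((w s - w t : W) : E) + (s - t) • e := by
      simp only [x, Submodule.coe_sub, sub_smul]
      abel
    have hperp : ⟪((w s - w t : W) : E), (s - t) • e⟫_ℝ = 0 := by
      rw [real_inner_smul_right, mem_orthogonal_singleton_iff_inner_left.mp (w s - w t).2,
        mul_zero]
    have hSperp : ⟪S (x s) - S (x t), ((w s - w t : W) : E)⟫_ℝ = 0 := by
      rw [← sub_sub_sub_cancel_right _ _ b]
      exact inner_left_of_mem_orthogonal (w s - w t).2 (sub_mem (hw s) (hw t))
    calc c * ‖s - t‖ ^ 2 = c * ‖(s - t) • e‖ ^ 2 := by rw [norm_smul, he, mul_one]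
      _ ≤ c * ‖x s - x t‖ ^ 2 := by
        rw [hsplit, norm_add_sq_real, hperp]
        gcongr
        linarith [sq_nonneg ‖((w s - w t : W) : E)‖]
      _ ≤ ⟪S (x s) - S (x t), x s - x t⟫_ℝ := hS _ _
      _ = ⟪⟪S (x s) - b, e⟫_ℝ - ⟪S (x t) - b, e⟫_ℝ, s - t⟫_ℝ := by
        rw [hsplit, inner_add_right, hSperp, zero_add, real_inner_smul_right, Real.inner_apply,
          ← inner_sub_left, sub_sub_sub_cancel_right, mul_comm]
  obtain ⟨t, ht⟩ := hψ.surjective_of_real hc (by fun_prop) 0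
  refine ⟨x t, ?_⟩
  have hmem : S (x t) - b ∈ W ⊓ Wᗮ := ⟨mem_orthogonal_singleton_iff_inner_left.mpr ht, hw t⟩
  rwa [inf_orthogonal_eq_bot, Submodule.mem_bot, sub_eq_zero] at hmem

theorem surjective_of_finiteDimensional [FiniteDimensional ℝ E] (hS : IsStronglyMonotone c S)
    (hc : 0 < c) (hScont : Continuous S) : Surjective S := by
  suffices ∀ n, ∀ (V : Type _) [NormedAddCommGroup V] [InnerProductSpace ℝ V]
      [FiniteDimensional ℝ V], finrank ℝ V = n → ∀ T : V → V, IsStronglyMonotone c T →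
      Continuous T → Surjective T from this _ E rfl S hS hScont
  intro n
  induction n with
  | zero =>
    intro V _ _ _ hV T _ _ b
    have : Subsingleton V := finrank_zero_iff.mp hV
    exact ⟨b, Subsingleton.elim _ _⟩
  | succ n ih =>
    intro V _ _ _ hV T hT hTcont
    have : Nontrivial V := finrank_pos_iff (R := ℝ) |>.mp (by omega)
    obtain ⟨e, he⟩ := exists_norm_eq V zero_le_one
    refine hT.surjective_of_orthogonal_span_singleton hc hTcont he fun T' hT' hT'cont =>
      ih _ ?_ T' hT' hT'cont
    have h := (ℝ ∙ e).finrank_add_finrank_orthogonal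
    rw [finrank_span_singleton (norm_ne_zero_iff.mp (he.trans_ne one_ne_zero))] at h
    omega

theorem surjective [CompleteSpace E] (hS : IsStronglyMonotone c S) (hc : 0 < c)
    (hScont : Continuous S) : Surjective S := by
  intro b
  let D := {K : Submodule ℝ E // FiniteDimensional ℝ K}
  have : Nonempty D := ⟨⟨⊥, inferInstance⟩⟩
  have : IsDirected D (· ≤ ·) := ⟨fun K L => by
    have := K.2
    have := L.2
    exact ⟨⟨K.1 ⊔ L.1, inferInstance⟩, le_sup_left (a := K.1), le_sup_right (b := L.1)⟩⟩
  let F : Ultrafilter D := Ultrafilter.of atTop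
  have hgalerkin : ∀ K : D, ∃ w : K.1, S w - b ∈ K.1ᗮ := fun K =>
    have := K.2
    hS.exists_sub_mem_orthogonal hScont
      (fun _ hT hTcont => hT.surjective_of_finiteDimensional hc hTcont) b
  choose x hx using hgalerkin
  have hbound : ∀ K, ‖(x K : E)‖ ≤ ‖b - S 0‖ / c := by
    intro K
    rw [le_div_iff₀' hc]
    refine sub_zero (x K : E) ▸ hS.mul_norm_sub_le (le_of_eq ?_)
    rw [sub_zero, ← sub_add_sub_cancel (S (x K)) b (S 0), inner_add_left,
      inner_left_of_mem_orthogonal (x K).2 (hx K), zero_add]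
  obtain ⟨z, hz⟩ := exists_tendsto_inner_of_norm_le F hbound
  refine ⟨z, eq_of_forall_inner_sub_nonneg hScont fun v => ?_⟩
  have hlim : Tendsto (fun K => ⟪S v - b, v - x K⟫_ℝ) F (𝓝 ⟪S v - b, v - z⟫_ℝ) := by
    simpa only [inner_sub_right, real_inner_comm (S v - b)] using
      tendsto_const_nhds.sub (hz (S v - b))
  refine ge_of_tendsto hlim (Ultrafilter.of_le atTop ?_)
  filter_upwards [eventually_ge_atTop (⟨ℝ ∙ v, inferInstance⟩ : D)] with K hK
  have hvK : v - x K ∈ K.1 := sub_mem (hK (mem_span_singleton_self v)) (x K).2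
  calc 0 ≤ ⟪S v - S (x K), v - x K⟫_ℝ + ⟪S (x K) - b, v - x K⟫_ℝ := by
        rw [inner_left_of_mem_orthogonal hvK (hx K), add_zero]
        exact (by positivity : 0 ≤ c * ‖v - x K‖ ^ 2).trans (hS v (x K))
    _ = ⟪S v - b, v - x K⟫_ℝ := by rw [← inner_add_left, sub_add_sub_cancel]

end IsStronglyMonotone

end RealHilbert

section Adjoint

open RCLike ContinuousLinearMap

variable {𝕜 E : Type*} [RCLike 𝕜] [NormedAddCommGroup E] [InnerProductSpace 𝕜 E] [CompleteSpace E]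
  {c : ℝ} {Q : E →L[𝕜] E}

theorem injective_adjoint_of_coercive (hc : 0 < c) (hQ : ∀ u, c * ‖u‖ ^ 2 ≤ re ⟪Q u, u⟫_𝕜) :
    Injective (adjoint Q) := by
  refine (injective_iff_map_eq_zero _).mpr fun z hz => ?_
  have h := hQ z
  rw [← adjoint_inner_right, hz, inner_zero_right, map_zero] at h
  exact norm_eq_zero.mp <| (pow_eq_zero_iff two_ne_zero).mp <|
    (nonpos_of_mul_nonpos_right h hc).antisymm (by positivity)

theorem le_re_inner_adjoint_sub {φ : E → E} (hmono : ∀ u₁ u₂, 0 ≤ re ⟪φ u₂ - φ u₁, u₂ - u₁⟫_𝕜)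
    (hQ : ∀ u, c * ‖u‖ ^ 2 ≤ re ⟪Q u, u⟫_𝕜) (v x y : E) :
    c * ‖x - y‖ ^ 2 ≤ re ⟪adjoint Q (x - φ (v - Q x)) - adjoint Q (y - φ (v - Q y)), x - y⟫_𝕜 := by
  have hφ := hmono (v - Q x) (v - Q y)
  rw [sub_sub_sub_cancel_left, ← map_sub] at hφ
  calc c * ‖x - y‖ ^ 2 ≤ re ⟪Q (x - y), x - y⟫_𝕜 := hQ _
    _ ≤ re ⟪Q (x - y), x - y⟫_𝕜 + re ⟪φ (v - Q y) - φ (v - Q x), Q (x - y)⟫_𝕜 :=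
      le_add_of_nonneg_right hφ
    _ = re ⟪x - y + (φ (v - Q y) - φ (v - Q x)), Q (x - y)⟫_𝕜 := by
      rw [inner_add_left, map_add, inner_re_symm (x - y)]
    _ = _ := by
      rw [← adjoint_inner_left, ← map_sub]
      congr 3
      abel

end Adjoint

/-- For continuous monotone `φ` and coercive `Q`, the equation `y = r + Q φ(u − y)` has a
unique solution `y` for every `u, r`. -/
theorem stmt4 {U : Type*} [NormedAddCommGroup U] [InnerProductSpace ℂ U] [CompleteSpace U]
    (φ : U → U) (hcont : Continuous φ)
    (hmono : ∀ u₁ u₂ : U, 0 ≤ (⟪φ u₂ - φ u₁, u₂ - u₁⟫_ℂ).re)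
    (Q : U →L[ℂ] U) (c : ℝ) (hc : 0 < c)
    (hQ : ∀ u : U, c * ‖u‖ ^ 2 ≤ (⟪Q u, u⟫_ℂ).re) :
    ∀ u r : U, ∃! y : U, y = r + Q (φ (u - y)) := by
  intro u r
  let : InnerProductSpace ℝ U := InnerProductSpace.rclikeToReal ℂ U
  set S : U → U := fun w => ContinuousLinearMap.adjoint Q (w - φ (u - r - Q w))
  have hS : IsStronglyMonotone c S := le_re_inner_adjoint_sub hmono hQ (u - r)
  have hsol : ∀ y, y = r + Q (φ (u - y)) ↔ ∃ w, S w = 0 ∧ y = r + Q w := by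
    intro y
    constructor
    · intro hy
      have hy' : u - r - Q (φ (u - y)) = u - y := by rw [sub_sub, ← hy]
      exact ⟨φ (u - y), by simp [S, hy'], hy⟩
    · rintro ⟨w, hw, rfl⟩
      have hw' : w = φ (u - r - Q w) :=
        sub_eq_zero.mp (injective_adjoint_of_coercive hc hQ (hw.trans (map_zero _).symm))
      rw [← sub_sub, ← hw']
  obtain ⟨w, hw⟩ := hS.surjective hc (by fun_prop) 0
  refine ⟨r + Q w, (hsol _).2 ⟨w, hw, rfl⟩, fun y hy => ?_⟩
  obtain ⟨w', hw', rfl⟩ := (hsol y).1 hy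
  rw [hS.injective hc (hw'.trans hw.symm)]
end

section
/- Let ψ : [0,∞) → [0,∞) be non-decreasing, globally Lipschitz with constant L, and ψ(0) = 0. Define φ : U → U on a complex Hilbert space U by φ(0) = 0 and φ(u) = ψ(‖u‖)·u/‖u‖ for u ≠ 0. Then Re⟨φ(u₂) − φ(u₁), u₂ − u₁⟩ ≥ (1/L)‖φ(u₂) − φ(u₁)‖² for all u₁, u₂ ∈ U. -/
/-!
Since `ψ 0 = 0` and `0 / 0 = 0`, `φ u = (ψ ‖u‖ / ‖u‖) • u` holds for every `u`. Both sides of the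
inequality are affine in `Re⟪u₂, u₁⟫`, which ranges over `[-‖u₁‖‖u₂‖, ‖u₁‖‖u₂‖]`, so it suffices to
treat collinear `u₁, u₂`. On a line `φ` acts as the odd extension `ψ̃` of `ψ`, which is monotone
and `L`-Lipschitz, and the claim becomes the one-dimensional bound `(p - q)² ≤ L (p - q)(x - y)`
for `p = ψ̃ x`, `q = ψ̃ y`.
-/

open scoped InnerProductSpace

lemma sq_le_mul_mul_of_abs_le {p x L : ℝ} (h : |p| ≤ L * |x|) (hpx : 0 ≤ p * x) :
    p ^ 2 ≤ L * (p * x) :=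
  calc p ^ 2 = |p| * |p| := (abs_mul_abs_self p).symm ▸ sq p
    _ ≤ L * |x| * |p| := mul_le_mul_of_nonneg_right h (abs_nonneg p)
    _ = L * (p * x) := by rw [mul_assoc, ← abs_mul, mul_comm x, abs_of_nonneg hpx]

lemma add_mul_nonneg_of_abs_le {A B c t : ℝ} (h_sub : 0 ≤ A - B * c) (h_add : 0 ≤ A + B * c)
    (ht : |t| ≤ c) : 0 ≤ A + B * t := by
  obtain ⟨htl, htu⟩ := abs_le.mp ht
  rcases le_total 0 B with hB | hB
  · nlinarith [mul_le_mul_of_nonneg_left htl hB]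
  · nlinarith [mul_le_mul_of_nonpos_left htu hB]

/-- `h_sub` and `h_add` are the cases `⟪y, x⟫ = ‖x‖‖y‖` and `⟪y, x⟫ = -‖x‖‖y‖`. -/
lemma norm_smul_sub_smul_sq_le_mul_inner {F : Type*} [NormedAddCommGroup F]
    [InnerProductSpace ℝ F] (x y : F) {α β L : ℝ}
    (h_sub : (β * ‖y‖ - α * ‖x‖) ^ 2 ≤ L * ((β * ‖y‖ - α * ‖x‖) * (‖y‖ - ‖x‖)))
    (h_add : (β * ‖y‖ + α * ‖x‖) ^ 2 ≤ L * ((β * ‖y‖ + α * ‖x‖) * (‖y‖ + ‖x‖))) :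
    ‖β • y - α • x‖ ^ 2 ≤ L * ⟪β • y - α • x, y - x⟫_ℝ := by
  have hnorm : ‖β • y - α • x‖ ^ 2 =
      β ^ 2 * ‖y‖ ^ 2 + α ^ 2 * ‖x‖ ^ 2 - 2 * (α * β) * ⟪y, x⟫_ℝ := by
    rw [norm_sub_sq_real, norm_smul, norm_smul, real_inner_smul_left, real_inner_smul_right,
      Real.norm_eq_abs, Real.norm_eq_abs, mul_pow, mul_pow, sq_abs, sq_abs]
    ring
  have hinner : ⟪β • y - α • x, y - x⟫_ℝ =
      β * ‖y‖ ^ 2 + α * ‖x‖ ^ 2 - (α + β) * ⟪y, x⟫_ℝ := by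
    rw [inner_sub_left, inner_sub_right, inner_sub_right, real_inner_smul_left,
      real_inner_smul_left, real_inner_smul_left, real_inner_smul_left,
      real_inner_self_eq_norm_sq, real_inner_self_eq_norm_sq, real_inner_comm x y]
    ring
  have key := add_mul_nonneg_of_abs_le
    (A := L * (β * ‖y‖ ^ 2 + α * ‖x‖ ^ 2) - β ^ 2 * ‖y‖ ^ 2 - α ^ 2 * ‖x‖ ^ 2)
    (B := 2 * (α * β) - L * (α + β)) (by nlinarith) (by nlinarith) (abs_real_inner_le_norm y x)
  rw [hnorm, hinner]
  linarith

theorem stmt8_general {U : Type*} [NormedAddCommGroup U] [InnerProductSpace ℂ U]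
    (ψ : ℝ → ℝ) (L : ℝ) (hL : 0 < L)
    (hψ0 : ψ 0 = 0)
    (hψmono : ∀ r s : ℝ, 0 ≤ r → r ≤ s → ψ r ≤ ψ s)
    (hψlip : ∀ r s : ℝ, 0 ≤ r → 0 ≤ s → |ψ r - ψ s| ≤ L * |r - s|)
    (φ : U → U) (hφ0 : φ 0 = 0)
    (hφ : ∀ u : U, u ≠ 0 → φ u = (ψ ‖u‖ / ‖u‖) • u) :
    ∀ u₁ u₂ : U, (1 / L) * ‖φ u₂ - φ u₁‖ ^ 2 ≤ (⟪φ u₂ - φ u₁, u₂ - u₁⟫_ℂ).re := by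
  have hφ_eq (u : U) : φ u = (ψ ‖u‖ / ‖u‖) • u := by
    rcases eq_or_ne u 0 with rfl | hu
    · simp [hφ0]
    · exact hφ u hu
  have hψ_div_mul (r : ℝ) : ψ r / r * r = ψ r := div_mul_cancel_of_imp fun h => h ▸ hψ0
  have hψ_nonneg (r : ℝ) (hr : 0 ≤ r) : 0 ≤ ψ r := hψ0 ▸ hψmono 0 r le_rfl hr
  have hψ_le (r : ℝ) (hr : 0 ≤ r) : ψ r ≤ L * r := by
    simpa [hψ0, abs_of_nonneg hr] using (le_abs_self _).trans (hψlip r 0 hr le_rfl)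
  intro u₁ u₂
  let := InnerProductSpace.complexToReal (G := U)
  rw [show (⟪φ u₂ - φ u₁, u₂ - u₁⟫_ℂ).re = ⟪φ u₂ - φ u₁, u₂ - u₁⟫_ℝ from rfl,
    hφ_eq u₁, hφ_eq u₂, one_div_mul_eq_div, div_le_iff₀' hL]
  have hr : 0 ≤ ‖u₁‖ := norm_nonneg _
  have hs : 0 ≤ ‖u₂‖ := norm_nonneg _
  apply norm_smul_sub_smul_sq_le_mul_inner <;> rw [hψ_div_mul, hψ_div_mul] <;>
    apply sq_le_mul_mul_of_abs_le
  · exact hψlip _ _ hs hr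
  · rcases le_total ‖u₁‖ ‖u₂‖ with h | h
    · exact mul_nonneg (sub_nonneg.mpr (hψmono _ _ hr h)) (sub_nonneg.mpr h)
    · exact mul_nonneg_of_nonpos_of_nonpos (sub_nonpos.mpr (hψmono _ _ hs h)) (sub_nonpos.mpr h)
  · rw [abs_of_nonneg (add_nonneg (hψ_nonneg _ hs) (hψ_nonneg _ hr)),
      abs_of_nonneg (add_nonneg hs hr), mul_add]
    exact add_le_add (hψ_le _ hs) (hψ_le _ hr)
  · exact mul_nonneg (add_nonneg (hψ_nonneg _ hs) (hψ_nonneg _ hr)) (add_nonneg hs hr)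

/-- The radial function `φ(u) = ψ(‖u‖)·u/‖u‖` (with `φ(0)=0`) induced by a non-decreasing,
`L`-Lipschitz `ψ : [0,∞) → [0,∞)` with `ψ(0)=0` satisfies
`Re⟨φ(u₂) − φ(u₁), u₂ − u₁⟩ ≥ (1/L)‖φ(u₂) − φ(u₁)‖²`. -/
theorem stmt8 {U : Type*} [NormedAddCommGroup U] [InnerProductSpace ℂ U] [CompleteSpace U]
    (ψ : ℝ → ℝ) (L : ℝ) (hL : 0 < L)
    (hψ0 : ψ 0 = 0)
    (hψnonneg : ∀ r : ℝ, 0 ≤ r → 0 ≤ ψ r)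
    (hψmono : ∀ r s : ℝ, 0 ≤ r → r ≤ s → ψ r ≤ ψ s)
    (hψlip : ∀ r s : ℝ, 0 ≤ r → 0 ≤ s → |ψ r - ψ s| ≤ L * |r - s|)
    (φ : U → U) (hφ0 : φ 0 = 0)
    (hφ : ∀ u : U, u ≠ 0 → φ u = (ψ ‖u‖ / ‖u‖) • u) :
    ∀ u₁ u₂ : U, (1 / L) * ‖φ u₂ - φ u₁‖ ^ 2 ≤ (⟪φ u₂ - φ u₁, u₂ - u₁⟫_ℂ).re :=
  stmt8_general ψ L hL hψ0 hψmono hψlip φ hφ0 hφ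
end

section
/- Let X, U be complex Hilbert spaces, A the generator of a strongly continuous semigroup on X with λ ∈ ρ(A) for some λ > 0, B ∈ L(U, X₋₁) with (λ − A)⁻¹B ∈ L(U, X), and suppose the system node is impedance passive, i.e., Re⟨Ax + Bu, x⟩ ≤ Re⟨C&D(x,u), u⟩ for all (x,u) in the system node domain. Then for all u ∈ U and λ > 0, λ‖(λ − A)⁻¹Bu‖² ≤ Re⟨P(λ)u, u⟩, where P(λ)u = C&D((λ−A)⁻¹Bu, u) is the transfer function. Consequently ‖(λ−A)⁻¹B‖² ≤ ‖P(λ)‖/λ. -/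
open scoped InnerProductSpace

open RCLike

section

variable {𝕜 E F : Type*} [RCLike 𝕜]
  [NormedAddCommGroup E] [InnerProductSpace 𝕜 E] [NormedAddCommGroup F] [InnerProductSpace 𝕜 F]

theorem re_inner_ofReal_smul_self (r : ℝ) (x : E) : re ⟪(r : 𝕜) • x, x⟫_𝕜 = r * ‖x‖ ^ 2 := by
  rw [inner_smul_real_left, smul_re, inner_self_eq_norm_sq]

theorem ContinuousLinearMap.re_inner_apply_self_le (S : F →L[𝕜] F) (u : F) :
    re ⟪S u, u⟫_𝕜 ≤ ‖S‖ * ‖u‖ ^ 2 :=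
  calc re ⟪S u, u⟫_𝕜 ≤ ‖S u‖ * ‖u‖ := re_inner_le_norm _ _
    _ ≤ ‖S‖ * ‖u‖ * ‖u‖ := by gcongr; exact S.le_opNorm u
    _ = ‖S‖ * ‖u‖ ^ 2 := by ring

theorem ContinuousLinearMap.sq_opNorm_le_of_mul_sq_le_re_inner (T : F →L[𝕜] E) (S : F →L[𝕜] F)
    {c : ℝ} (hc : 0 < c) (h : ∀ u, c * ‖T u‖ ^ 2 ≤ re ⟪S u, u⟫_𝕜) : ‖T‖ ^ 2 ≤ ‖S‖ / c := by
  have hpointwise (u : F) : ‖T u‖ ^ 2 ≤ ‖S‖ / c * ‖u‖ ^ 2 := by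
    rw [div_mul_eq_mul_div, le_div_iff₀ hc, mul_comm]
    exact (h u).trans (S.re_inner_apply_self_le u)
  have hbound : ‖T‖ ≤ √(‖S‖ / c) := by
    refine T.opNorm_le_bound (Real.sqrt_nonneg _) fun u => ?_
    rw [← Real.sqrt_sq (norm_nonneg u), ← Real.sqrt_mul (by positivity)]
    exact Real.le_sqrt_of_sq_le (hpointwise u)
  exact (Real.le_sqrt (norm_nonneg T) (by positivity)).mp hbound

end

theorem stmt15_general {X U : Type*}
    [NormedAddCommGroup X] [InnerProductSpace ℂ X]
    [NormedAddCommGroup U] [InnerProductSpace ℂ U]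
    (Dom : Set (X × U)) (AB : X × U → X) (CD : X × U → U)
    (hpass : ∀ p ∈ Dom, (⟪AB p, p.1⟫_ℂ).re ≤ (⟪CD p, p.2⟫_ℂ).re)
    (lam : ℝ) (hlam : 0 < lam)
    (RB : U →L[ℂ] X)
    (hdom : ∀ u : U, (RB u, u) ∈ Dom)
    (hAB : ∀ u : U, AB (RB u, u) = (lam : ℂ) • RB u)
    (P : U →L[ℂ] U) (hP : ∀ u : U, P u = CD (RB u, u)) :
    (∀ u : U, lam * ‖RB u‖ ^ 2 ≤ (⟪P u, u⟫_ℂ).re) ∧ ‖RB‖ ^ 2 ≤ ‖P‖ / lam := by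
  have hcoercive (u : U) : lam * ‖RB u‖ ^ 2 ≤ (⟪P u, u⟫_ℂ).re :=
    calc lam * ‖RB u‖ ^ 2 = (⟪(lam : ℂ) • RB u, RB u⟫_ℂ).re :=
          (re_inner_ofReal_smul_self (𝕜 := ℂ) lam (RB u)).symm
      _ = (⟪AB (RB u, u), RB u⟫_ℂ).re := by rw [hAB u]
      _ ≤ (⟪CD (RB u, u), u⟫_ℂ).re := hpass _ (hdom u)
      _ = (⟪P u, u⟫_ℂ).re := by rw [hP u]
  exact ⟨hcoercive, RB.sq_opNorm_le_of_mul_sq_le_re_inner P hlam hcoercive⟩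

/-- For an impedance passive system node `S = [A&B; C&D]` with domain `Dom`, whose transfer
function is `P(λ)u = C&D((λ−A)⁻¹Bu, u)`, one has `λ‖(λ−A)⁻¹Bu‖² ≤ Re⟨P(λ)u, u⟩` for all
`u`, and consequently `‖(λ−A)⁻¹B‖² ≤ ‖P(λ)‖/λ`.  Here `RB = (λ−A)⁻¹B`, and the defining
property of `RB` is expressed by `A&B((λ−A)⁻¹Bu, u) = λ·(λ−A)⁻¹Bu`. -/
theorem stmt15 {X U : Type*}
    [NormedAddCommGroup X] [InnerProductSpace ℂ X] [CompleteSpace X]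
    [NormedAddCommGroup U] [InnerProductSpace ℂ U] [CompleteSpace U]
    (Dom : Set (X × U)) (AB : X × U → X) (CD : X × U → U)
    (hpass : ∀ p ∈ Dom, (⟪AB p, p.1⟫_ℂ).re ≤ (⟪CD p, p.2⟫_ℂ).re)
    (lam : ℝ) (hlam : 0 < lam)
    (RB : U →L[ℂ] X)
    (hdom : ∀ u : U, (RB u, u) ∈ Dom)
    (hAB : ∀ u : U, AB (RB u, u) = (lam : ℂ) • RB u)
    (P : U →L[ℂ] U) (hP : ∀ u : U, P u = CD (RB u, u)) :
    (∀ u : U, lam * ‖RB u‖ ^ 2 ≤ (⟪P u, u⟫_ℂ).re) ∧ ‖RB‖ ^ 2 ≤ ‖P‖ / lam :=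
  stmt15_general Dom AB CD hpass lam hlam RB hdom hAB P hP
end
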